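/- The function α(c) = (c − √(c²+8))/2 + 4c/(c − √(c²+8))² satisfies α(1) = 0 and α'(c) > 0 for all c > 1; consequently α(c) > 0 for all c > 1. -/

import Mathlib

/-!
Put `s = √(c² + 8)` and `d = s - c > 0`. Differentiating gives
`α'(c) = (d³ + 8d + 24c) / (2 s d²)`, and since `d (d + 2c) = s² - c² = 8`,
`d (d³ + 8d + 24c) = (d² - 2)² + 92 > 0`. So `α` is strictly increasing on all of `ℝ`,
and `α 1 = 0` because `√9 = 3`.
-/

open Real

noncomputable def alpha (c : ℝ) : ℝ :=
  (c - √(c ^ 2 + 8)) / 2 + 4 * c / (c - √(c ^ 2 + 8)) ^ 2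

lemma Real.lt_sqrt_sq_add (c : ℝ) {a : ℝ} (ha : 0 < a) : c < √(c ^ 2 + a) :=
  (le_abs_self c).trans_lt <| by
    rw [← sqrt_sq_eq_abs]
    exact sqrt_lt_sqrt (sq_nonneg c) (lt_add_of_pos_right _ ha)

lemma Real.hasDerivAt_sqrt_sq_add (c : ℝ) {a : ℝ} (ha : 0 < a) :
    HasDerivAt (fun x => √(x ^ 2 + a)) (c / √(c ^ 2 + a)) c := by
  have hpos : 0 < c ^ 2 + a := by positivity
  convert ((hasDerivAt_pow 2 c).add_const a).sqrt hpos.ne' using 1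
  field_simp
  ring

lemma hasDerivAt_alpha (c : ℝ) :
    HasDerivAt alpha
      (((√(c ^ 2 + 8) - c) ^ 3 + 8 * (√(c ^ 2 + 8) - c) + 24 * c) /
        (2 * √(c ^ 2 + 8) * (√(c ^ 2 + 8) - c) ^ 2)) c := by
  set s := √(c ^ 2 + 8) with hs
  have hsc : c < s := lt_sqrt_sq_add c (by norm_num)
  have hs_pos : 0 < s := sqrt_pos.mpr (by positivity)
  have hgap : HasDerivAt (fun x => x - √(x ^ 2 + 8)) (1 - c / s) c :=
    (hasDerivAt_id c).sub (hasDerivAt_sqrt_sq_add c (by norm_num))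
  have hgap_ne : (c - s) ^ 2 ≠ 0 := pow_ne_zero 2 (sub_ne_zero.mpr hsc.ne)
  have hsc' : s - c ≠ 0 := sub_ne_zero.mpr hsc.ne'
  refine ((hgap.div_const 2).add
    (((hasDerivAt_id' c).const_mul 4).div (hgap.fun_pow 2) hgap_ne)).congr_deriv ?_
  rw [← hs]
  simp only [Nat.cast_ofNat, Nat.add_one_sub_one, pow_one, mul_one]
  rw [← neg_sub s c]
  field_simp
  ring

lemma deriv_alpha_pos (c : ℝ) : 0 < deriv alpha c := by
  rw [(hasDerivAt_alpha c).deriv]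
  set s := √(c ^ 2 + 8)
  have hd : 0 < s - c := sub_pos.mpr (lt_sqrt_sq_add c (by norm_num))
  have hs_pos : 0 < s := sqrt_pos.mpr (by positivity)
  have hs_sq : s ^ 2 = c ^ 2 + 8 := sq_sqrt (by positivity)
  have hnum : 0 < (s - c) ^ 3 + 8 * (s - c) + 24 * c := by
    have hprod : (s - c) * ((s - c) + 2 * c) = 8 := by linear_combination hs_sq
    have key : (s - c) * ((s - c) ^ 3 + 8 * (s - c) + 24 * c) = ((s - c) ^ 2 - 2) ^ 2 + 92 := by
      linear_combination 12 * hprod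
    exact pos_of_mul_pos_right (key ▸ by positivity) hd.le
  positivity

lemma alpha_strictMono : StrictMono alpha :=
  strictMono_of_deriv_pos deriv_alpha_pos

lemma alpha_one : alpha 1 = 0 := by
  have h : √((1 : ℝ) ^ 2 + 8) = 3 := by
    rw [show (1 : ℝ) ^ 2 + 8 = 3 ^ 2 by norm_num, sqrt_sq (by norm_num)]
  simp only [alpha, h]
  norm_num

theorem alpha_properties :
    let α : ℝ → ℝ := fun c =>
      (c - Real.sqrt (c ^ 2 + 8)) / 2 + 4 * c / (c - Real.sqrt (c ^ 2 + 8)) ^ 2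
    α 1 = 0 ∧ (∀ c : ℝ, 1 < c → 0 < deriv α c) ∧ ∀ c : ℝ, 1 < c → 0 < α c := by
  show alpha 1 = 0 ∧ (∀ c : ℝ, 1 < c → 0 < deriv alpha c) ∧ ∀ c : ℝ, 1 < c → 0 < alpha c
  refine ⟨alpha_one, fun c _ => deriv_alpha_pos c, fun c hc => ?_⟩
  exact alpha_one ▸ alpha_strictMono hc
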